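/- arXiv:1411.5509 — 2 statements merged into one kernel-verified Lean document; each statement's English description precedes it below -/
import Mathlib

section
/- Let G be a connected r-regular simple graph with n vertices and m edges, and let L_RT denote the Laplacian matrix of RT(G) written in block form. Then for every real number μ with μ ≠ 1, μ ≠ 2 and μ ≠ 3, det(μ·I_{m+3n} − L_RT) = (μ−1)^n · (μ−2)^(m−n) · (μ−3)^(2n) · det( y·I_n − L(G) ), where y = (μ−2)²/(μ−3) − rμ/(μ−3) − 2(μ−2)/((μ−1)(μ−3)) and L(G) is the Laplacian matrix of G. -/
open Matrix SimpleGraph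

/-- The Laplacian matrix of `RT(G)` in block form, given the vertex–edge incidence
matrix `B` of an `r`-regular graph `G` and its Laplacian matrix `L`.  The index type is
(edge-vertices of `G`) ⊕ (original vertices of `G`) ⊕ (pairs of new vertices). -/
def LRTMatrix {n m : ℕ} (r : ℕ) (B : Matrix (Fin n) (Fin m) ℝ)
    (L : Matrix (Fin n) (Fin n) ℝ) :
    Matrix (Fin m ⊕ Fin n ⊕ Fin n × Fin 2) (Fin m ⊕ Fin n ⊕ Fin n × Fin 2) ℝ :=
  fun i j =>
    match i, j with
    | Sum.inl a, Sum.inl b => if a = b then 2 else 0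
    | Sum.inl a, Sum.inr (Sum.inl v) => -(B v a)
    | Sum.inl _, Sum.inr (Sum.inr _) => 0
    | Sum.inr (Sum.inl v), Sum.inl a => -(B v a)
    | Sum.inr (Sum.inl v), Sum.inr (Sum.inl w) => L v w + (if v = w then (r : ℝ) + 2 else 0)
    | Sum.inr (Sum.inl v), Sum.inr (Sum.inr (w, _)) => if v = w then -1 else 0
    | Sum.inr (Sum.inr _), Sum.inl _ => 0
    | Sum.inr (Sum.inr (w, _)), Sum.inr (Sum.inl v) => if w = v then -1 else 0
    | Sum.inr (Sum.inr (w, k)), Sum.inr (Sum.inr (w', k')) =>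
        if w = w' then (if k = k' then 2 else -1) else 0

/-!
Two Schur complements. Eliminating the edge-vertex block `(μ - 2) I_m` replaces the vertex
block `(μ - r - 2) I - L` by `(μ - r - 2) I - L - B Bᵀ / (μ - 2)`, and `B Bᵀ = D + A = 2r I - L`
for an `r`-regular graph. The new pairs contribute the block `I_n ⊗ K` with
`K = [[μ - 2, 1], [1, μ - 2]]`, `det K = (μ - 1)(μ - 3)`; eliminating it subtracts
`(𝟙ᵀ K⁻¹ 𝟙) I_n = 2 / (μ - 1) I_n`, because `K 𝟙 = (μ - 1) 𝟙`. What is left is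
`((μ - 3) / (μ - 2)) (y I - L)`.
-/

open scoped Kronecker

namespace SimpleGraph

variable {V R : Type*} [Fintype V] [DecidableEq V] {G : SimpleGraph V} [DecidableRel G.Adj]

theorem IsRegularOfDegree.degMatrix_eq [Semiring R] {r : ℕ} (h : G.IsRegularOfDegree r) :
    G.degMatrix R = (r : R) • 1 := by
  ext v w
  simp [degMatrix, diagonal_apply, one_apply, h.degree_eq]

theorem incMatrix_mul_transpose_eq_degMatrix_add_adjMatrix [Semiring R] :
    G.incMatrix R * (G.incMatrix R)ᵀ = G.degMatrix R + G.adjMatrix R := by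
  rw [incMatrix_mul_transpose]
  ext v w
  by_cases h : v = w <;> simp [h, degMatrix]

theorem IsRegularOfDegree.incMatrix_mul_transpose [Ring R] {r : ℕ}
    (h : G.IsRegularOfDegree r) :
    G.incMatrix R * (G.incMatrix R)ᵀ = (2 * r : R) • 1 - G.lapMatrix R := by
  rw [incMatrix_mul_transpose_eq_degMatrix_add_adjMatrix, lapMatrix, h.degMatrix_eq, two_mul,
    add_smul]
  abel

theorem submatrix_incMatrix_mul_transpose [Semiring R] {ι : Type*} [Fintype ι]
    (φ : ι ≃ G.edgeSet) :
    (G.incMatrix R).submatrix id (fun j => (φ j : Sym2 V)) *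
        ((G.incMatrix R).submatrix id (fun j => (φ j : Sym2 V)))ᵀ =
      G.incMatrix R * (G.incMatrix R)ᵀ := by
  ext v w
  simp only [mul_apply, submatrix_apply, transpose_apply, id_eq]
  rw [Fintype.sum_equiv φ _ (fun e : G.edgeSet => G.incMatrix R v e * G.incMatrix R w e)
    (fun _ => rfl), ← Finset.sum_subtype G.edgeFinset (fun _ => mem_edgeFinset)
    (fun e => G.incMatrix R v e * G.incMatrix R w e)]
  refine Fintype.sum_subset fun e he => ?_
  by_contra h
  exact he (by rw [G.incMatrix_of_notMem_incidenceSet fun hv => h (by simpa using hv.1), zero_mul])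

end SimpleGraph

namespace Matrix

variable {ι κ R : Type*}

/-- The matrix `I ⊗ 𝟙ᵀ`, with its columns indexed by `ι × κ`. -/
def fstIncidence (ι κ R : Type*) [DecidableEq ι] [Zero R] [One R] : Matrix ι (ι × κ) R :=
  of fun v p => if v = p.1 then 1 else 0

theorem fromBlocks_sub_fromBlocks {l m n o : Type*} [Sub R] (A A' : Matrix l n R)
    (B B' : Matrix l o R) (C C' : Matrix m n R) (D D' : Matrix m o R) :
    fromBlocks A B C D - fromBlocks A' B' C' D' =
      fromBlocks (A - A') (B - B') (C - C') (D - D') := by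
  ext (_ | _) (_ | _) <;> rfl

theorem det_fromBlocks_smul_one₁₁ {m n : Type*} [Fintype m] [DecidableEq m] [Fintype n]
    [DecidableEq n] [Field R] {c : R} (hc : c ≠ 0)
    (B : Matrix m n R) (C : Matrix n m R) (D : Matrix n n R) :
    (fromBlocks (c • 1) B C D).det = c ^ Fintype.card m * (D - c⁻¹ • (C * B)).det := by
  have hinv : (c • 1 : Matrix m m R) * (c⁻¹ • 1) = 1 := by
    rw [smul_mul_smul, mul_inv_cancel₀ hc, one_mul, one_smul]
  let := invertibleOfRightInverse _ _ hinv
  rw [det_fromBlocks₁₁, invOf_eq_right_inv hinv, det_smul, det_one, mul_one, Matrix.mul_smul,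
    Matrix.mul_one, Matrix.smul_mul]

variable [Fintype ι] [Fintype κ] [DecidableEq ι]

theorem fstIncidence_mul_one_kronecker_mul_transpose [CommSemiring R] (K : Matrix κ κ R) :
    fstIncidence ι κ R * ((1 : Matrix ι ι R) ⊗ₖ K) * (fstIncidence ι κ R)ᵀ =
      (∑ i, ∑ j, K i j) • 1 := by
  ext v w
  simp only [fstIncidence, mul_apply, of_apply, kroneckerMap_apply, one_apply, ite_mul, one_mul,
    zero_mul, mul_ite, mul_zero, Fintype.sum_prod_type, Finset.sum_ite_irrel,
    Finset.sum_const_zero, Finset.sum_ite_eq', Finset.mem_univ, ↓reduceIte, transpose_apply,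
    mul_one, Finset.sum_ite_eq, smul_apply, smul_eq_mul]
  rw [Finset.sum_comm]

theorem det_fromBlocks_fstIncidence_one_kronecker [DecidableEq κ] [CommRing R]
    (A : Matrix ι ι R) (K : Matrix κ κ R) (hK : IsUnit K.det) :
    (fromBlocks A (fstIncidence ι κ R) (fstIncidence ι κ R)ᵀ ((1 : Matrix ι ι R) ⊗ₖ K)).det =
      K.det ^ Fintype.card ι * (A - (∑ i, ∑ j, K⁻¹ i j) • 1).det := by
  have hdet : ((1 : Matrix ι ι R) ⊗ₖ K).det = K.det ^ Fintype.card ι := by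
    rw [det_kronecker, det_one, one_pow, one_mul]
  let := invertibleOfIsUnitDet _ (hdet ▸ hK.pow _)
  rw [det_fromBlocks₂₂, invOf_eq_nonsing_inv, inv_kronecker, inv_one,
    fstIncidence_mul_one_kronecker_mul_transpose, hdet]

end Matrix

section PairBlock

variable {𝕜 : Type*} [Field 𝕜]

/-- The block of `μ • 1 - LRTMatrix r B L` on one new pair `(w₁ᵛ, w₂ᵛ)`. -/
def pairBlock (μ : 𝕜) : Matrix (Fin 2) (Fin 2) 𝕜 := !![μ - 2, 1; 1, μ - 2]

theorem det_pairBlock (μ : 𝕜) : (pairBlock μ).det = (μ - 1) * (μ - 3) := by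
  rw [pairBlock, det_fin_two_of]
  ring

theorem sum_inv_pairBlock {μ : 𝕜} (h1 : μ - 1 ≠ 0) (h3 : μ - 3 ≠ 0) :
    ∑ i, ∑ j, (pairBlock μ)⁻¹ i j = 2 / (μ - 1) := by
  rw [inv_def, det_pairBlock, pairBlock, adjugate_fin_two_of]
  simp only [Ring.inverse_eq_inv', Matrix.smul_apply, of_apply, cons_val', cons_val_fin_one,
    smul_eq_mul, Fin.sum_univ_two, cons_val_zero, cons_val_one, mul_neg, mul_one]
  field_simp
  ring

end PairBlock

theorem smul_one_sub_LRTMatrix {n m : ℕ} (r : ℕ) (B : Matrix (Fin n) (Fin m) ℝ)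
    (L : Matrix (Fin n) (Fin n) ℝ) (μ : ℝ) :
    μ • 1 - LRTMatrix r B L =
      fromBlocks ((μ - 2) • 1) (fromCols Bᵀ 0) (fromRows B 0)
        (fromBlocks ((μ - (r + 2)) • 1 - L) (fstIncidence (Fin n) (Fin 2) ℝ)
          (fstIncidence (Fin n) (Fin 2) ℝ)ᵀ ((1 : Matrix (Fin n) (Fin n) ℝ) ⊗ₖ pairBlock μ)) := by
  ext (a | v | ⟨w, k⟩) (b | v' | ⟨w', k'⟩)
  all_goals try fin_cases k <;> fin_cases k'
  all_goals simp [LRTMatrix, fstIncidence, pairBlock, one_apply]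
  all_goals split_ifs <;> first | ring1 | simp_all

theorem laplacian_polynomial_RT_laplacian_form_general {n m : ℕ} (r : ℕ)
    (G : SimpleGraph (Fin n)) [DecidableRel G.Adj]
    (hreg : G.IsRegularOfDegree r)
    (φ : Fin m ≃ G.edgeSet) (B : Matrix (Fin n) (Fin m) ℝ)
    (hB : ∀ (v : Fin n) (j : Fin m), B v j = if v ∈ (φ j : Sym2 (Fin n)) then 1 else 0)
    (μ : ℝ) (h1 : μ ≠ 1) (h2 : μ ≠ 2) (h3 : μ ≠ 3) :
    (μ • (1 : Matrix (Fin m ⊕ Fin n ⊕ Fin n × Fin 2) (Fin m ⊕ Fin n ⊕ Fin n × Fin 2) ℝ)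
        - LRTMatrix r B (G.lapMatrix ℝ)).det
      = (μ - 1) ^ n * (μ - 2) ^ ((m : ℤ) - (n : ℤ)) * (μ - 3) ^ (2 * n) *
        ((((μ - 2) ^ 2 / (μ - 3) - (r : ℝ) * μ / (μ - 3)
              - 2 * (μ - 2) / ((μ - 1) * (μ - 3)))
            • (1 : Matrix (Fin n) (Fin n) ℝ)) - G.lapMatrix ℝ).det := by
  have h1' : μ - 1 ≠ 0 := sub_ne_zero.mpr h1
  have h2' : μ - 2 ≠ 0 := sub_ne_zero.mpr h2
  have h3' : μ - 3 ≠ 0 := sub_ne_zero.mpr h3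
  set L := G.lapMatrix ℝ
  set y := (μ - 2) ^ 2 / (μ - 3) - (r : ℝ) * μ / (μ - 3) - 2 * (μ - 2) / ((μ - 1) * (μ - 3))
  have hBBt : B * Bᵀ = (2 * r : ℝ) • 1 - L := by
    have hB_eq : B = (G.incMatrix ℝ).submatrix id (fun j => (φ j : Sym2 (Fin n))) := by
      ext v j
      simp [hB, incMatrix_apply', incidenceSet]
    rw [hB_eq, submatrix_incMatrix_mul_transpose, hreg.incMatrix_mul_transpose]
  have hSchur : (μ - (r + 2)) • 1 - L - (μ - 2)⁻¹ • ((2 * r : ℝ) • 1 - L) - (2 / (μ - 1)) • 1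
      = ((μ - 3) / (μ - 2)) • (y • 1 - L) := by
    ext v w
    by_cases h : v = w <;> simp [h, y] <;> field_simp <;> ring
  rw [smul_one_sub_LRTMatrix, det_fromBlocks_smul_one₁₁ h2', fromRows_mul_fromCols,
    fromBlocks_smul, fromBlocks_sub_fromBlocks]
  simp only [Matrix.mul_zero, Matrix.zero_mul, smul_zero, sub_zero]
  have hK : IsUnit (pairBlock μ).det := by
    rw [det_pairBlock]
    exact (mul_ne_zero h1' h3').isUnit
  rw [det_fromBlocks_fstIncidence_one_kronecker _ _ hK, sum_inv_pairBlock h1' h3', hBBt, hSchur,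
    det_smul, det_pairBlock]
  simp only [Fintype.card_fin, zpow_sub₀ h2', zpow_natCast, div_pow, mul_pow, two_mul, pow_add]
  field_simp

theorem laplacian_polynomial_RT_laplacian_form {n m : ℕ} (r : ℕ)
    (G : SimpleGraph (Fin n)) [DecidableRel G.Adj]
    (hconn : G.Connected) (hreg : G.IsRegularOfDegree r)
    (φ : Fin m ≃ G.edgeSet) (B : Matrix (Fin n) (Fin m) ℝ)
    (hB : ∀ (v : Fin n) (j : Fin m), B v j = if v ∈ (φ j : Sym2 (Fin n)) then 1 else 0)
    (μ : ℝ) (h1 : μ ≠ 1) (h2 : μ ≠ 2) (h3 : μ ≠ 3) :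
    (μ • (1 : Matrix (Fin m ⊕ Fin n ⊕ Fin n × Fin 2) (Fin m ⊕ Fin n ⊕ Fin n × Fin 2) ℝ)
        - LRTMatrix r B (G.lapMatrix ℝ)).det
      = (μ - 1) ^ n * (μ - 2) ^ ((m : ℤ) - (n : ℤ)) * (μ - 3) ^ (2 * n) *
        ((((μ - 2) ^ 2 / (μ - 3) - (r : ℝ) * μ / (μ - 3)
              - 2 * (μ - 2) / ((μ - 1) * (μ - 3)))
            • (1 : Matrix (Fin n) (Fin n) ℝ)) - G.lapMatrix ℝ).det :=
  laplacian_polynomial_RT_laplacian_form_general r G hreg φ B hB μ h1 h2 h3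
end

section
/- Let G be a connected r-regular simple graph with n vertices and m edges, and let L_RT denote the Laplacian matrix of RT(G) written in block form. Then for every real number μ with μ ≠ 1 and μ ≠ 3, det(μ·I_{m+3n} − L_RT) = (μ−1)^n · (μ−3)^n · det S, where S is the (m+n)×(m+n) block matrix S = [[(μ−2)I_m, Bᵀ], [B, (μ−r−2−2/(μ−1))I_n − L(G)]]. -/
open Matrix SimpleGraph

/-!
Order the vertices of `RT(G)` as ((edge-vertices ⊕ original vertices) ⊕ new vertices). Then
`μ I - L_RT` has lower-right block `I_n ⊗ K` with `K = !![μ-2, 1; 1, μ-2]`, of determinant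
`((μ-1)(μ-3))^n`, and the new pair at `v` is joined to `v` alone, by all-ones entries. Its Schur
complement therefore only lowers each diagonal entry of the original-vertex block by the sum of the
entries of `K⁻¹`, which is `2 / (μ - 1)`.
-/

open scoped Kronecker

section
variable {R ι α κ : Type*} [CommRing R] [Fintype ι] [DecidableEq ι] [Fintype α]
  [DecidableEq α] [Fintype κ] [DecidableEq κ]

theorem det_fromBlocks_one_kronecker (A : Matrix ι ι R) (P : Matrix ι α R) (Q : Matrix α ι R)
    (K : Matrix κ κ R) (hK : IsUnit K.det) :
    (fromBlocks A (P.submatrix id Prod.fst) (Q.submatrix Prod.fst id)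
        ((1 : Matrix α α R) ⊗ₖ K)).det
      = K.det ^ Fintype.card α * (A - (∑ k, ∑ k', K⁻¹ k k') • (P * Q)).det := by
  have hD : IsUnit ((1 : Matrix α α R) ⊗ₖ K).det := by
    rw [det_kronecker, det_one, one_pow, one_mul]
    exact hK.pow _
  let _ := invertibleOfIsUnitDet _ hD
  rw [det_fromBlocks₂₂, invOf_eq_nonsing_inv, inv_kronecker, inv_one, det_kronecker, det_one,
    one_pow, one_mul]
  congr 2
  ext i j
  simp only [Matrix.sub_apply, mul_apply, submatrix_apply, id_eq, kroneckerMap_apply, one_apply,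
    ite_mul, one_mul, zero_mul, mul_ite, mul_zero, Fintype.sum_prod_type, Finset.sum_ite_irrel,
    Finset.sum_const_zero, Finset.sum_ite_eq', Finset.mem_univ, ↓reduceIte, Finset.sum_mul,
    Matrix.smul_apply, smul_eq_mul, Finset.mul_sum, sub_right_inj]
  refine Finset.sum_congr rfl fun a _ => ?_
  rw [Finset.sum_comm]
  exact Finset.sum_congr rfl fun _ _ => Finset.sum_congr rfl fun _ _ => by ring
end

theorem sum_inv_apply_fin_two_symm {K : Type*} [Field K] {a b : K} (hab : a - b ≠ 0)
    (hab' : a + b ≠ 0) :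
    ∑ i, ∑ j, (!![a, b; b, a])⁻¹ i j = 2 / (a + b) := by
  have hdet : a ^ 2 - b ^ 2 ≠ 0 := by
    rw [show a ^ 2 - b ^ 2 = (a - b) * (a + b) by ring]
    exact mul_ne_zero hab hab'
  rw [inv_def, adjugate_fin_two_of, det_fin_two_of]
  simp only [Ring.inverse_eq_inv', Matrix.smul_apply, of_apply, cons_val', cons_val_fin_one,
    smul_eq_mul, Fin.sum_univ_two, cons_val_zero, cons_val_one, mul_neg]
  field_simp
  ring

theorem smul_one_sub_LRTMatrix_submatrix_sumAssoc {n m : ℕ} (r : ℕ) (B : Matrix (Fin n) (Fin m) ℝ)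
    (L : Matrix (Fin n) (Fin n) ℝ) (μ : ℝ) :
    (μ • 1 - LRTMatrix r B L).submatrix (Equiv.sumAssoc _ _ _) (Equiv.sumAssoc _ _ _)
      = fromBlocks (fromBlocks ((μ - 2) • 1) Bᵀ B ((μ - r - 2) • 1 - L))
          ((fromRows 0 1 : Matrix (Fin m ⊕ Fin n) (Fin n) ℝ).submatrix id Prod.fst)
          ((fromCols 0 1 : Matrix (Fin n) (Fin m ⊕ Fin n) ℝ).submatrix Prod.fst id)
          ((1 : Matrix (Fin n) (Fin n) ℝ) ⊗ₖ !![μ - 2, 1; 1, μ - 2]) := by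
  ext ((a | v) | ⟨w, k⟩) ((b | v') | ⟨w', k'⟩)
  all_goals try fin_cases k
  all_goals try fin_cases k'
  all_goals simp only [LRTMatrix, submatrix_apply, Equiv.sumAssoc_apply_inl_inl,
    Equiv.sumAssoc_apply_inl_inr, Equiv.sumAssoc_apply_inr, Matrix.sub_apply, Matrix.smul_apply,
    one_apply, Sum.inl.injEq, Sum.inr.injEq, Prod.mk.injEq, reduceCtorEq, ↓reduceIte, smul_eq_mul,
    mul_ite, mul_one, mul_zero, fromBlocks_apply₁₁, fromBlocks_apply₁₂, fromBlocks_apply₂₁,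
    fromBlocks_apply₂₂, transpose_apply, id_eq, fromRows_apply_inl, fromRows_apply_inr,
    fromCols_apply_inl, fromCols_apply_inr, Matrix.zero_apply, zero_sub, sub_self, sub_neg_eq_add,
    zero_add, kroneckerMap_apply, of_apply, cons_val', cons_val_zero, cons_val_one,
    cons_val_fin_one, ite_mul, one_mul, zero_mul, zero_ne_one, and_false, and_true, Fin.isValue,
    Fin.mk_one, Fin.zero_eta, eq_comm]
  all_goals split_ifs <;> ring

theorem det_smul_one_sub_LRTMatrix {n m : ℕ} (r : ℕ) (B : Matrix (Fin n) (Fin m) ℝ)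
    (L : Matrix (Fin n) (Fin n) ℝ) {μ : ℝ} (h1 : μ ≠ 1) (h3 : μ ≠ 3) :
    (μ • 1 - LRTMatrix r B L).det
      = (μ - 1) ^ n * (μ - 3) ^ n *
        (fromBlocks ((μ - 2) • 1) Bᵀ B (((μ - r - 2 - 2 / (μ - 1)) • 1) - L)).det := by
  have hsub : μ - 2 - 1 ≠ 0 := by contrapose! h3; linarith
  have hadd : μ - 2 + 1 ≠ 0 := by contrapose! h1; linarith
  have hdet : (!![μ - 2, 1; 1, μ - 2]).det = (μ - 1) * (μ - 3) := by
    rw [det_fin_two_of]; ring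
  rw [← det_submatrix_equiv_self (Equiv.sumAssoc _ _ _), smul_one_sub_LRTMatrix_submatrix_sumAssoc,
    det_fromBlocks_one_kronecker _ _ _ _ (by simp [hdet, sub_ne_zero, h1, h3]),
    sum_inv_apply_fin_two_symm hsub hadd, hdet, Fintype.card_fin, mul_pow, fromRows_mul_fromCols]
  congr 2
  rw [show μ - 2 + 1 = μ - 1 by ring]
  simp only [Matrix.mul_zero, Matrix.mul_one, fromBlocks_smul, smul_zero, sub_eq_add_neg,
    fromBlocks_neg, fromBlocks_add, neg_zero, add_zero]
  congr 1
  module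

theorem laplacian_polynomial_RT_schur_step_general {n m : ℕ} (r : ℕ)
    (G : SimpleGraph (Fin n)) [DecidableRel G.Adj]
    (B : Matrix (Fin n) (Fin m) ℝ)
    (μ : ℝ) (h1 : μ ≠ 1) (h3 : μ ≠ 3) :
    (μ • (1 : Matrix (Fin m ⊕ Fin n ⊕ Fin n × Fin 2) (Fin m ⊕ Fin n ⊕ Fin n × Fin 2) ℝ)
        - LRTMatrix r B (G.lapMatrix ℝ)).det
      = (μ - 1) ^ n * (μ - 3) ^ n *
        (Matrix.fromBlocks
            ((μ - 2) • (1 : Matrix (Fin m) (Fin m) ℝ)) Bᵀ B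
            (((μ - (r : ℝ) - 2 - 2 / (μ - 1)) • (1 : Matrix (Fin n) (Fin n) ℝ))
              - G.lapMatrix ℝ)).det :=
  det_smul_one_sub_LRTMatrix r B (G.lapMatrix ℝ) h1 h3

theorem laplacian_polynomial_RT_schur_step {n m : ℕ} (r : ℕ)
    (G : SimpleGraph (Fin n)) [DecidableRel G.Adj]
    (hconn : G.Connected) (hreg : G.IsRegularOfDegree r)
    (φ : Fin m ≃ G.edgeSet) (B : Matrix (Fin n) (Fin m) ℝ)
    (hB : ∀ (v : Fin n) (j : Fin m), B v j = if v ∈ (φ j : Sym2 (Fin n)) then 1 else 0)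
    (μ : ℝ) (h1 : μ ≠ 1) (h3 : μ ≠ 3) :
    (μ • (1 : Matrix (Fin m ⊕ Fin n ⊕ Fin n × Fin 2) (Fin m ⊕ Fin n ⊕ Fin n × Fin 2) ℝ)
        - LRTMatrix r B (G.lapMatrix ℝ)).det
      = (μ - 1) ^ n * (μ - 3) ^ n *
        (Matrix.fromBlocks
            ((μ - 2) • (1 : Matrix (Fin m) (Fin m) ℝ)) Bᵀ B
            (((μ - (r : ℝ) - 2 - 2 / (μ - 1)) • (1 : Matrix (Fin n) (Fin n) ℝ))
              - G.lapMatrix ℝ)).det :=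
  laplacian_polynomial_RT_schur_step_general r G B μ h1 h3
end
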